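/- arXiv:2411.15696 — 2 statements merged into one kernel-verified Lean document; each statement's English description precedes it below -/
import Mathlib

section
/- Let β_i, β_l > 0 and φ_i, φ_l ∈ ℝ, f_i(x) = β_i·cos(x − φ_i), f_l(x) = β_l·cos(x − φ_l). Suppose q₂ ∈ ℝ satisfies f_i(q₂) = f_l(q₂) and f_i(x) > f_l(x) for all x in the open interval (q₂ − π, q₂). Then f_i(x) < f_l(x) for all x in (q₂, q₂ + π). -/
/-- If `f_i` dominates `f_l` on the half-period interval ending at an
intersection `q₂`, then it is dominated by `f_l` on the half-period interval
starting at `q₂`. -/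
theorem stmt3 (βi βl φi φl : ℝ) (hβi : 0 < βi) (hβl : 0 < βl) (q₂ : ℝ)
    (hq₂ : βi * Real.cos (q₂ - φi) = βl * Real.cos (q₂ - φl))
    (hdom : ∀ x ∈ Set.Ioo (q₂ - Real.pi) q₂,
      βl * Real.cos (x - φl) < βi * Real.cos (x - φi)) :
    ∀ x ∈ Set.Ioo q₂ (q₂ + Real.pi),
      βi * Real.cos (x - φi) < βl * Real.cos (x - φl) := by
  intro x hx
  have h := hdom (x - Real.pi) ⟨by linarith [hx.1], by linarith [hx.2]⟩
  have hi : Real.cos (x - Real.pi - φi) = -Real.cos (x - φi) := by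
    rw [show x - Real.pi - φi = x - φi - Real.pi by ring, Real.cos_sub_pi]
  have hl : Real.cos (x - Real.pi - φl) = -Real.cos (x - φl) := by
    rw [show x - Real.pi - φl = x - φl - Real.pi by ring, Real.cos_sub_pi]
  rw [hi, hl] at h
  nlinarith
end

section
/- Let K ≥ 2, and let β_1,…,β_K > 0, φ_1,…,φ_K ∈ ℝ define curves f_i(x) = β_i·cos(x − φ_i) with the phasors β_i e^{iφ_i} pairwise distinct. Fix i, and suppose there exist q₁ < q₂ with q₂ − q₁ < 2π such that f_i(x) > f_l(x) for all l ≠ i and all x ∈ (q₁, q₂), f_i(q₁) = f_{l'}(q₁) for some l' ≠ i, and f_i(q₂) = f_l(q₂) for some l ≠ i. Then for every x ∈ (q₂, q₁ + 2π) (equivalently, outside [q₁, q₂] modulo 2π), there exists some index m ≠ i with f_m(x) ≥ f_i(x); i.e., f_i is not strictly maximal anywhere outside [q₁, q₂] within the period. -/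
open Complex

/-- Key identity: if two harmonics agree at `q`, their difference at `q + t`
is a multiple of `sin t`. -/
lemma gident (bi pI bl pl q t : ℝ)
    (h0 : bi * Real.cos (q - pI) = bl * Real.cos (q - pl)) :
    bi * Real.cos (q + t - pI) - bl * Real.cos (q + t - pl)
      = -((bi * Real.sin (q - pI) - bl * Real.sin (q - pl)) * Real.sin t) := by
  have e1 : q + t - pI = (q - pI) + t := by ring
  have e2 : q + t - pl = (q - pl) + t := by ring
  rw [e1, e2, Real.cos_add, Real.cos_add]
  linear_combination (Real.cos t) * h0

/-- Each cosine curve has at most one active interval per period: if curve `i`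
is strictly maximal on `(q₁, q₂)` with intersections at both endpoints, then it
is not strictly maximal anywhere in `(q₂, q₁ + 2π)`. -/
theorem stmt14 (K : ℕ) (hK : 2 ≤ K) (β φ : Fin K → ℝ) (hβ : ∀ i, 0 < β i)
    (hdist : ∀ i j : Fin K, i ≠ j →
      (β i : ℂ) * Complex.exp (φ i * Complex.I) ≠
      (β j : ℂ) * Complex.exp (φ j * Complex.I))
    (i : Fin K) (q₁ q₂ : ℝ) (hlt : q₁ < q₂) (hperiod : q₂ - q₁ < 2 * Real.pi)
    (hactive : ∀ l, l ≠ i → ∀ x ∈ Set.Ioo q₁ q₂,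
      β l * Real.cos (x - φ l) < β i * Real.cos (x - φ i))
    (hq₁ : ∃ l', l' ≠ i ∧ β i * Real.cos (q₁ - φ i) = β l' * Real.cos (q₁ - φ l'))
    (hq₂ : ∃ l, l ≠ i ∧ β i * Real.cos (q₂ - φ i) = β l * Real.cos (q₂ - φ l)) :
    ∀ x ∈ Set.Ioo q₂ (q₁ + 2 * Real.pi),
      ∃ m, m ≠ i ∧ β i * Real.cos (x - φ i) ≤ β m * Real.cos (x - φ m) := by
  obtain ⟨l', hl'i, hL⟩ := hq₁
  obtain ⟨l, hli, hR⟩ := hq₂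
  have hπ := Real.pi_pos
  set t₀ : ℝ := min (q₂ - q₁) Real.pi / 2 with ht₀def
  have ht₀pos : 0 < t₀ := by
    have : 0 < min (q₂ - q₁) Real.pi := lt_min (by linarith) hπ
    positivity
  have ht₀lt : t₀ < q₂ - q₁ := by
    have h1 : min (q₂ - q₁) Real.pi ≤ q₂ - q₁ := min_le_left _ _
    have : 0 < min (q₂ - q₁) Real.pi := lt_min (by linarith) hπ
    linarith
  have ht₀ltπ : t₀ < Real.pi := by
    have h1 : min (q₂ - q₁) Real.pi ≤ Real.pi := min_le_right _ _
    linarith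
  have hsin₀ : 0 < Real.sin t₀ := Real.sin_pos_of_pos_of_lt_pi ht₀pos ht₀ltπ
  -- constants
  set C : ℝ := β i * Real.sin (q₂ - φ i) - β l * Real.sin (q₂ - φ l) with hCdef
  set C' : ℝ := β i * Real.sin (q₁ - φ i) - β l' * Real.sin (q₁ - φ l') with hC'def
  -- C > 0 from positivity just left of q₂
  have hC : 0 < C := by
    have hx : q₂ - t₀ ∈ Set.Ioo q₁ q₂ := ⟨by linarith, by linarith⟩
    have hpos := hactive l hli _ hx
    have hid := gident (β i) (φ i) (β l) (φ l) q₂ (-t₀) hR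
    rw [Real.sin_neg] at hid
    have : q₂ + -t₀ = q₂ - t₀ := by ring
    rw [this] at hid
    nlinarith [hid, hpos, hsin₀]
  -- C' < 0 from positivity just right of q₁
  have hC' : C' < 0 := by
    have hx : q₁ + t₀ ∈ Set.Ioo q₁ q₂ := ⟨by linarith, by linarith⟩
    have hpos := hactive l' hl'i _ hx
    have hid := gident (β i) (φ i) (β l') (φ l') q₁ t₀ hL
    nlinarith [hid, hpos, hsin₀]
  intro x hx
  obtain ⟨hx1, hx2⟩ := hx
  by_cases hcase : x ≤ q₂ + Real.pi
  · -- use l : f_i - f_l = -C sin(x - q₂) ≤ 0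
    refine ⟨l, hli, ?_⟩
    have hid := gident (β i) (φ i) (β l) (φ l) q₂ (x - q₂) hR
    have he : q₂ + (x - q₂) = x := by ring
    rw [he] at hid
    have hs : 0 ≤ Real.sin (x - q₂) :=
      Real.sin_nonneg_of_nonneg_of_le_pi (by linarith) (by linarith)
    nlinarith [hid, hs, hC]
  · -- use l' : x - q₁ ∈ (π, 2π), sin < 0, f_i - f_l' = -C' sin(x-q₁) < 0
    refine ⟨l', hl'i, ?_⟩
    have hid := gident (β i) (φ i) (β l') (φ l') q₁ (x - q₁) hL
    have he : q₁ + (x - q₁) = x := by ring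
    rw [he] at hid
    have hs : Real.sin (x - q₁) < 0 := by
      have h1 : Real.pi < x - q₁ := by push_neg at hcase; linarith
      have h2 : x - q₁ < 2 * Real.pi := by linarith
      have := Real.sin_pos_of_pos_of_lt_pi (x := x - q₁ - Real.pi) (by linarith) (by linarith)
      have hrw : x - q₁ = (x - q₁ - Real.pi) + Real.pi := by ring
      rw [hrw, Real.sin_add_pi]
      linarith
    nlinarith [hid, hs, hC']
end
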